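/- arXiv:0810.0041 — 3 statements merged into one kernel-verified Lean document; each statement's English description precedes it below -/
import Mathlib

section
/- If N is a δ-coclosed submodule of M and X is a proper submodule of N such that N/X is δ-small in M/X, then N = X ⊕ X' for some submodule X' ≤ N. -/
open Submodule

section Defs

universe u v

variable (R : Type u) [Ring R]

/-- A submodule `L` is essential in `M` if it intersects every nonzero submodule nontrivially. -/
def IsEssentialSub {M : Type v} [AddCommGroup M] [Module R M] (L : Submodule R M) : Prop :=
  ∀ K : Submodule R M, K ≠ ⊥ → L ⊓ K ≠ ⊥

/-- A module is singular if it is isomorphic to `N ⧸ L` for some module `N` and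
essential submodule `L ≤ N`. -/
def IsSingular (M : Type v) [AddCommGroup M] [Module R M] : Prop :=
  ∃ (N : Type v) (_ : AddCommGroup N) (_ : Module R N) (L : Submodule R N),
    IsEssentialSub R L ∧ Nonempty ((N ⧸ L) ≃ₗ[R] M)

variable {M : Type v} [AddCommGroup M] [Module R M]

/-- `N` is small in `M`: `N + Z ≠ M` for every proper submodule `Z`. -/
def SmallSub (N : Submodule R M) : Prop :=
  ∀ Z : Submodule R M, Z ≠ ⊤ → N ⊔ Z ≠ ⊤

/-- `N` is δ-small in `M`: `N + Z ≠ M` for every proper submodule `Z` with `M ⧸ Z` singular. -/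
def DeltaSmall (N : Submodule R M) : Prop :=
  ∀ Z : Submodule R M, Z ≠ ⊤ → IsSingular R (M ⧸ Z) → N ⊔ Z ≠ ⊤

/-- `δ(M)`: the sum of all δ-small submodules of `M`. -/
def deltaRad : Submodule R M := sSup {N : Submodule R M | DeltaSmall R N}

/-- The radical: intersection of all maximal submodules. -/
def radM : Submodule R M := sInf {K : Submodule R M | IsCoatom K}

/-- The socle: sum of all simple submodules. -/
def socM : Submodule R M := sSup {S : Submodule R M | IsAtom S}

/-- `N` is a δ-supplement of `K` in `M`: `N + K = M` and `N ∩ K` is δ-small in `N`. -/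
def IsDeltaSupplement (N K : Submodule R M) : Prop :=
  N ⊔ K = ⊤ ∧ DeltaSmall R ((N ⊓ K).comap N.subtype)

/-- `N` is a δ-supplement submodule of `M`. -/
def IsDeltaSupplementSub (N : Submodule R M) : Prop :=
  ∃ K : Submodule R M, IsDeltaSupplement R N K

/-- `N` is a supplement of `K` in `M`: `N + K = M` and `N ∩ K` is small in `N`. -/
def IsSupplement (N K : Submodule R M) : Prop :=
  N ⊔ K = ⊤ ∧ SmallSub R ((N ⊓ K).comap N.subtype)

/-- `M` is δ-supplemented: every submodule has a δ-supplement. -/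
def DeltaSupplemented (M : Type v) [AddCommGroup M] [Module R M] : Prop :=
  ∀ L : Submodule R M, ∃ N : Submodule R M, IsDeltaSupplement R N L

/-- `M` is supplemented: every submodule has a supplement. -/
def Supplemented (M : Type v) [AddCommGroup M] [Module R M] : Prop :=
  ∀ L : Submodule R M, ∃ N : Submodule R M, IsSupplement R N L

/-- `N` is δ-coclosed in `M`: if `X ≤ N`, `N/X` is singular and `N/X ≪_δ M/X`, then `X = N`. -/
def DeltaCoclosed (N : Submodule R M) : Prop :=
  ∀ X : Submodule R M, X ≤ N →
    IsSingular R ↥(N.map X.mkQ) → DeltaSmall R (N.map X.mkQ) → X = N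

/-- `N` is coclosed in `M`: if `X ≤ N` and `N/X ≪ M/X`, then `X = N`. -/
def Coclosed (N : Submodule R M) : Prop :=
  ∀ X : Submodule R M, X ≤ N → SmallSub R (N.map X.mkQ) → X = N

/-- A module is local if it has a largest proper submodule. -/
def LocalModule (M : Type v) [AddCommGroup M] [Module R M] : Prop :=
  ∃ L : Submodule R M, L ≠ ⊤ ∧ ∀ K : Submodule R M, K ≠ ⊤ → K ≤ L

/-- `M` is δ-local if `δ(M)` is δ-small in `M` and `δ(M)` is a maximal submodule. -/
def DeltaLocal (M : Type v) [AddCommGroup M] [Module R M] : Prop :=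
  DeltaSmall R (deltaRad R : Submodule R M) ∧ IsCoatom (deltaRad R : Submodule R M)

end Defs

/-! By Zorn's lemma choose `X' ≤ N` maximal with `X ∩ X' = 0`; modularity makes `X ⊕ X'` essential
in `N`, so `N/(X ⊕ X')` is singular, and it is δ-small in `M/(X ⊕ X')` as the image of `N/X`
under `M/X → M/(X ⊕ X')`. δ-coclosedness of `N` then forces `X ⊕ X' = N`. -/

section Lattice

variable {α : Type*} [CompleteLattice α] [IsModularLattice α] [IsCompactlyGenerated α]

theorem exists_le_disjoint_sup_essential (x n : α) :
    ∃ y ≤ n, Disjoint x y ∧ ∀ k ≤ n, Disjoint (x ⊔ y) k → k = ⊥ := by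
  obtain ⟨y, ⟨hyn, hxy⟩, hmax⟩ := zorn_le₀ {b | b ≤ n ∧ Disjoint x b} fun c hc hchain => by
    refine ⟨sSup c, ⟨sSup_le fun b hb => (hc hb).1, ?_⟩, fun b hb => le_sSup hb⟩
    exact (hchain.directedOn.disjoint_sSup_right).2 fun b hb => (hc hb).2
  refine ⟨y, hyn, hxy, fun k hkn hk => ?_⟩
  have hyk : y ⊔ k ≤ y :=
    hmax ⟨sup_le hyn hkn, hxy.disjoint_sup_right_of_disjoint_sup_left hk⟩ le_sup_left
  exact disjoint_self.1 (hk.mono_left ((le_sup_right.trans hyk).trans le_sup_right))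

end Lattice

section Modules

universe u v

variable {R : Type u} [Ring R]

theorem IsSingular.of_linearEquiv {A B : Type v} [AddCommGroup A] [Module R A]
    [AddCommGroup B] [Module R B] (h : IsSingular R A) (e : A ≃ₗ[R] B) : IsSingular R B := by
  obtain ⟨N, _, _, L, hL, ⟨f⟩⟩ := h
  exact ⟨N, _, _, L, hL, ⟨f.trans e⟩⟩

theorem isSingular_range_of_isEssentialSub_ker {N M : Type v} [AddCommGroup N] [Module R N]
    [AddCommGroup M] [Module R M] (f : N →ₗ[R] M) (hf : IsEssentialSub R (LinearMap.ker f)) :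
    IsSingular R (LinearMap.range f) :=
  ⟨N, _, _, _, hf, ⟨f.quotKerEquivRange⟩⟩

variable {M : Type v} [AddCommGroup M] [Module R M]

theorem isEssentialSub_comap_subtype {N Y : Submodule R M}
    (hY : ∀ K ≤ N, Disjoint Y K → K = ⊥) : IsEssentialSub R (Y.comap N.subtype) := by
  intro K hK hYK
  refine hK (Submodule.map_injective_of_injective N.injective_subtype ?_)
  rw [Submodule.map_bot]
  refine hY _ (Submodule.map_subtype_le N K) (Submodule.disjoint_def.2 ?_)
  rintro _ hxY ⟨k, hk, rfl⟩
  have : k ∈ Y.comap N.subtype ⊓ K := ⟨hxY, hk⟩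
  rw [hYK, Submodule.mem_bot] at this
  simp [this]

theorem isSingular_map_mkQ {N Y : Submodule R M} (hY : ∀ K ≤ N, Disjoint Y K → K = ⊥) :
    IsSingular R (N.map Y.mkQ) := by
  have hrange : LinearMap.range (Y.mkQ ∘ₗ N.subtype) = N.map Y.mkQ := by
    rw [LinearMap.range_comp, Submodule.range_subtype]
  have hker : LinearMap.ker (Y.mkQ ∘ₗ N.subtype) = Y.comap N.subtype := by
    rw [LinearMap.ker_comp, Submodule.ker_mkQ]
  rw [← hrange]
  exact isSingular_range_of_isEssentialSub_ker _ (hker ▸ isEssentialSub_comap_subtype hY)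

theorem DeltaSmall.map_of_surjective {M₂ : Type v} [AddCommGroup M₂] [Module R M₂]
    {A : Submodule R M} (hA : DeltaSmall R A) (q : M →ₗ[R] M₂) (hq : Function.Surjective q) :
    DeltaSmall R (A.map q) := by
  intro Z hZ hsing hAZ
  have hker : LinearMap.ker q ≤ Z.comap q := LinearMap.ker_le_comap q
  have hZ' : Z.comap q ≠ ⊤ := fun h => hZ <| by
    rw [← Submodule.map_comap_eq_of_surjective hq Z, h, Submodule.map_top,
      LinearMap.range_eq_top.2 hq]
  have hsing' : IsSingular R (M ⧸ Z.comap q) := by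
    have hsurj : Function.Surjective (Z.mkQ ∘ₗ q) := Z.mkQ_surjective.comp hq
    have hker' : LinearMap.ker (Z.mkQ ∘ₗ q) = Z.comap q := by
      rw [LinearMap.ker_comp, Submodule.ker_mkQ]
    exact hsing.of_linearEquiv ((Submodule.quotEquivOfEq _ _ hker'.symm).trans
      ((Z.mkQ ∘ₗ q).quotKerEquivOfSurjective hsurj)).symm
  refine hA _ hZ' hsing' ?_
  rw [← Submodule.comap_map_eq_self (le_sup_of_le_right hker), Submodule.map_sup,
    Submodule.map_comap_eq_of_surjective hq, hAZ, Submodule.comap_top]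

theorem DeltaSmall.map_mkQ_of_le {N X Y : Submodule R M} (h : DeltaSmall R (N.map X.mkQ))
    (hXY : X ≤ Y) : DeltaSmall R (N.map Y.mkQ) := by
  have := h.map_of_surjective _ (Submodule.factor_surjective hXY)
  rwa [← Submodule.map_comp, Submodule.factor_comp_mk] at this

end Modules

theorem deltaCoclosed_direct_summand_general {R : Type*} [Ring R] {M : Type*} [AddCommGroup M]
    [Module R M] (N X : Submodule R M) (hN : DeltaCoclosed R N) (hXN : X ≤ N)
    (hsmall : DeltaSmall R (N.map X.mkQ)) :
    ∃ X' : Submodule R M, X' ≤ N ∧ X ⊓ X' = ⊥ ∧ X ⊔ X' = N := by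
  obtain ⟨X', hX'N, hdisj, hess⟩ := exists_le_disjoint_sup_essential X N
  refine ⟨X', hX'N, hdisj.eq_bot, hN _ (sup_le hXN hX'N) (isSingular_map_mkQ hess) ?_⟩
  exact hsmall.map_mkQ_of_le le_sup_left

theorem deltaCoclosed_direct_summand {R : Type*} [Ring R] {M : Type*} [AddCommGroup M]
    [Module R M] (N X : Submodule R M) (hN : DeltaCoclosed R N) (hXN : X ≤ N) (hX : X ≠ N)
    (hsmall : DeltaSmall R (N.map X.mkQ)) :
    ∃ X' : Submodule R M, X' ≤ N ∧ X ⊓ X' = ⊥ ∧ X ⊔ X' = N :=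
  deltaCoclosed_direct_summand_general N X hN hXN hsmall
end

section
/- Every δ-local module is δ-supplemented. -/
open Submodule

/-!
If `L ≤ δ(M)`, then `L` is δ-small and `M` itself is a δ-supplement of `L`. Otherwise
`δ(M) + L = M`, as `δ(M)` is maximal. A submodule `Y` maximal with `Y ∩ L = 0` makes
`Y ⊕ L` essential, so `M ⧸ (Y ⊕ L)` is singular, and δ-smallness of `δ(M)` forces
`Y ⊕ L = M`. Then `Y` is a δ-supplement of `L`, with `Y ∩ L = 0`.
-/

theorem exists_maximal_disjoint {α : Type*} [CompleteLattice α] [IsCompactlyGenerated α]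
    (a : α) : ∃ b, Maximal (Disjoint · a) b :=
  zorn_le₀ {b | Disjoint b a} fun c hc hchain =>
    ⟨sSup c, hchain.directedOn.disjoint_sSup_left.mpr hc, fun _ => le_sSup⟩

section DeltaSmall

universe v

variable {R : Type*} [Ring R] {M M₂ : Type v} [AddCommGroup M] [Module R M]
  [AddCommGroup M₂] [Module R M₂]

theorem DeltaSmall.mono {N N' : Submodule R M} (h : DeltaSmall R N) (hle : N' ≤ N) :
    DeltaSmall R N' :=
  fun Z hZ hs hsup => h Z hZ hs (top_le_iff.mp (hsup ▸ sup_le_sup_right hle Z))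

theorem deltaSmall_bot : DeltaSmall R (⊥ : Submodule R M) :=
  fun Z hZ _ hsup => hZ (by rwa [bot_sup_eq] at hsup)

theorem IsSingular.of_equiv (hM : IsSingular R M) (e : M ≃ₗ[R] M₂) : IsSingular R M₂ := by
  obtain ⟨N, _, _, L, hL, ⟨f⟩⟩ := hM
  exact ⟨N, _, _, L, hL, ⟨f.trans e⟩⟩

theorem DeltaSmall.comap_equiv {N : Submodule R M₂} (h : DeltaSmall R N) (e : M ≃ₗ[R] M₂) :
    DeltaSmall R (N.comap (e : M →ₗ[R] M₂)) := by
  intro Z hZ hs hsup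
  refine h (Z.map (e : M →ₗ[R] M₂)) (Submodule.map_ne_top_iff.mpr hZ)
    (hs.of_equiv (Quotient.equiv Z _ e rfl)) ?_
  rw [← map_comap_eq_of_surjective e.surjective N, ← Submodule.map_sup, hsup,
    Submodule.map_eq_top_iff]

theorem isSingular_quotient_of_isEssentialSub {L : Submodule R M} (hL : IsEssentialSub R L) :
    IsSingular R (M ⧸ L) :=
  ⟨M, _, _, L, hL, ⟨LinearEquiv.refl R _⟩⟩

theorem isEssentialSub_sup_of_maximal_disjoint {Y L : Submodule R M}
    (hY : Maximal (Disjoint · L) Y) : IsEssentialSub R (Y ⊔ L) := by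
  intro K hK hYLK
  -- modularity: `K` is independent of `Y ⊕ L`, so `Y + K` still meets `L` trivially
  have hYK : Disjoint (Y ⊔ K) L :=
    (hY.prop.symm.disjoint_sup_right_of_disjoint_sup_left
      (by rwa [sup_comm, disjoint_iff])).symm
  have hKY : K ≤ Y := le_sup_right.trans (hY.2 hYK le_sup_left)
  exact hK (by rwa [inf_eq_right.mpr (hKY.trans le_sup_left)] at hYLK)

theorem exists_isCompl_of_deltaSmall_codisjoint {X L : Submodule R M} (hX : DeltaSmall R X)
    (hXL : Codisjoint X L) : ∃ Y, IsCompl Y L := by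
  obtain ⟨Y, hY⟩ := exists_maximal_disjoint L
  refine ⟨Y, hY.prop, codisjoint_iff.mpr ?_⟩
  by_contra hne
  refine hX (Y ⊔ L) hne
    (isSingular_quotient_of_isEssentialSub (isEssentialSub_sup_of_maximal_disjoint hY)) ?_
  exact codisjoint_iff.mp (hXL.mono_right le_sup_right)

theorem IsCompl.isDeltaSupplement {N K : Submodule R M} (h : IsCompl N K) :
    IsDeltaSupplement R N K := by
  refine ⟨h.sup_eq_top, ?_⟩
  rw [h.inf_eq_bot, comap_bot, ker_subtype]
  exact deltaSmall_bot

theorem isDeltaSupplement_top_of_deltaSmall {L : Submodule R M} (hL : DeltaSmall R L) :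
    IsDeltaSupplement R ⊤ L := by
  refine ⟨top_sup_eq L, ?_⟩
  rw [top_inf_eq]
  exact hL.comap_equiv topEquiv

end DeltaSmall

theorem deltaLocal_is_deltaSupplemented {R : Type*} [Ring R] (M : Type*) [AddCommGroup M]
    [Module R M] (h : DeltaLocal R M) : DeltaSupplemented R M := by
  intro L
  by_cases hL : L ≤ deltaRad R
  · exact ⟨⊤, isDeltaSupplement_top_of_deltaSmall (h.1.mono hL)⟩
  · obtain ⟨Y, hY⟩ :=
      exists_isCompl_of_deltaSmall_codisjoint h.1 (h.2.not_le_iff_codisjoint.mp hL)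
    exact ⟨Y, hY.isDeltaSupplement⟩
end

section
/- A ring R is semiperfect if and only if R is δ-semiperfect and semilocal (i.e., R/Jac(R) is semisimple). -/
open Submodule

/-!
Small submodules lie in the radical `J`, so a supplement of a submodule `L ⊇ J` maps to a
complement of `L / J` in `M / J`: supplemented modules are semisimple modulo their radical. Small
submodules are δ-small, so supplemented modules are also δ-supplemented.

Conversely, since `R` is cyclic, finitely many supplements of maximal left ideals already add up
to `R`; each of them is local, hence supplemented, and finite sums of supplemented modules are
supplemented. So it suffices to supplement every maximal left ideal `m`. Take a δ-supplement `N` of `m` and, as `R / J` is noetherian, some `x ∈ N \ m` whose left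
annihilator is maximal modulo `J`. If `Z ≤ Rx` and `(Rx ⊓ m) ⊔ Z = Rx`, then the δ-smallness of
`N ⊓ m` splits `N = Z ⊕ C` with `C ≤ N ⊓ m`. Writing `x = z + c`, maximality of the annihilator
forces `c = j x` with `j ∈ J`, so `z = (1 - j) x` and `x ∈ Z`: `Rx` supplements `m`.
-/

section Lattice

variable {α : Type*}

/- Analogues of `SmallSub`, `Supplemented` and `IsEssentialSub` in the interval below `b`
(resp. `x`) of a lattice. -/

def SmallIn [Lattice α] (a b : α) : Prop :=
  ∀ z ≤ b, a ⊔ z = b → z = b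

def SupplementedIn [Lattice α] (x : α) : Prop :=
  ∀ u ≤ x, ∃ v ≤ x, v ⊔ u = x ∧ SmallIn (v ⊓ u) v

def EssentialIn [Lattice α] [OrderBot α] (a b : α) : Prop :=
  ∀ k ≤ b, k ≠ ⊥ → a ⊓ k ≠ ⊥

section

variable [Lattice α] {a a₁ a₂ b c : α}

theorem SmallIn.mono_left (h : SmallIn a b) (ha : a₁ ≤ a) (hab : a ≤ b) : SmallIn a₁ b :=
  fun z hz hsup ↦ h z hz <| le_antisymm (sup_le hab hz) (hsup ▸ sup_le_sup_right ha z)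

theorem SmallIn.sup (h₁ : SmallIn a₁ b) (h₂ : SmallIn a₂ b) (ha₂ : a₂ ≤ b) :
    SmallIn (a₁ ⊔ a₂) b :=
  fun z hz hsup ↦ h₂ z hz <| h₁ (a₂ ⊔ z) (sup_le ha₂ hz) (by rwa [← sup_assoc])

theorem SmallIn.le_of_isCoatom [OrderTop α] (h : SmallIn a ⊤) (hm : IsCoatom b) : a ≤ b := by
  by_contra hab
  exact hm.1 <| h b le_top <| hm.2 _ (right_lt_sup.2 hab)

theorem smallIn_bot [OrderBot α] (b : α) : SmallIn ⊥ b :=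
  fun _ _ h ↦ by rwa [bot_sup_eq] at h

theorem supplementedIn_bot [OrderBot α] : SupplementedIn (⊥ : α) :=
  fun u hu ↦ ⟨⊥, le_rfl, by rw [le_bot_iff.1 hu, bot_sup_eq], (bot_inf_eq u).symm ▸ smallIn_bot ⊥⟩

variable [IsModularLattice α]

theorem SmallIn.mono_right (h : SmallIn a b) (hab : a ≤ b) (hbc : b ≤ c) : SmallIn a c := by
  intro z hz hsup
  have hbz : b ≤ z := by
    have : a ⊔ z ⊓ b = b := by rw [← sup_inf_assoc_of_le z hab, hsup, inf_eq_right.2 hbc]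
    exact (h _ inf_le_right this).symm.le.trans inf_le_left
  rw [← hsup, sup_eq_right.2 (hab.trans hbz)]

theorem sup_inf_eq_of_isCoatom [OrderTop α] {m y : α} (hm : IsCoatom m) (hy : y ≤ b)
    (hym : ¬ y ≤ m) : b ⊓ m ⊔ y = b := by
  have : y ⊔ m = ⊤ := by rw [sup_comm]; exact hm.2 _ (left_lt_sup.2 hym)
  rw [sup_comm, inf_comm, ← sup_inf_assoc_of_le m hy, this, top_inf_eq]

theorem sup_inf_le_inf_sup_sup_inf_sup (a b c : α) :
    (a ⊔ b) ⊓ c ≤ a ⊓ (b ⊔ c) ⊔ b ⊓ (a ⊔ c) := by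
  have h₁ : (a ⊔ b) ⊓ c ≤ a ⊓ (b ⊔ c) ⊔ b :=
    calc (a ⊔ b) ⊓ c ≤ (b ⊔ a) ⊓ (b ⊔ c) := sup_comm a b ▸ inf_le_inf_left _ le_sup_right
      _ = a ⊓ (b ⊔ c) ⊔ b := by rw [sup_inf_assoc_of_le a le_sup_left, sup_comm]
  calc (a ⊔ b) ⊓ c ≤ (a ⊓ (b ⊔ c) ⊔ b) ⊓ (a ⊔ c) := le_inf h₁ (inf_le_right.trans le_sup_right)
    _ = a ⊓ (b ⊔ c) ⊔ b ⊓ (a ⊔ c) := sup_inf_assoc_of_le b (inf_le_left.trans le_sup_left)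

theorem SupplementedIn.sup {x₁ x₂ : α} (h₁ : SupplementedIn x₁) (h₂ : SupplementedIn x₂) :
    SupplementedIn (x₁ ⊔ x₂) := by
  intro u hu
  obtain ⟨v₁, hv₁, hsup₁, hsmall₁⟩ := h₁ (x₁ ⊓ (x₂ ⊔ u)) inf_le_left
  obtain ⟨v₂, hv₂, hsup₂, hsmall₂⟩ := h₂ (x₂ ⊓ (v₁ ⊔ u)) inf_le_left
  have hx₂ : x₂ ≤ v₁ ⊔ v₂ ⊔ u := hsup₂.ge.trans <|
    sup_le (le_sup_right.trans le_sup_left) (inf_le_right.trans (sup_le_sup_right le_sup_left u))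
  have hx₁ : x₁ ≤ v₁ ⊔ v₂ ⊔ u := hsup₁.ge.trans <|
    sup_le (le_sup_left.trans le_sup_left) (inf_le_right.trans (sup_le hx₂ le_sup_right))
  refine ⟨v₁ ⊔ v₂, sup_le_sup hv₁ hv₂,
    le_antisymm (sup_le (sup_le_sup hv₁ hv₂) hu) (sup_le hx₁ hx₂), ?_⟩
  rw [← inf_assoc, inf_eq_left.2 hv₁] at hsmall₁
  rw [← inf_assoc, inf_eq_left.2 hv₂] at hsmall₂
  have hv₁small := hsmall₁.mono_right inf_le_left (le_sup_left : v₁ ≤ v₁ ⊔ v₂)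
  have hv₂small := hsmall₂.mono_right inf_le_left (le_sup_right : v₂ ≤ v₁ ⊔ v₂)
  refine (hv₁small.sup hv₂small (inf_le_left.trans le_sup_right)).mono_left ?_
    (sup_le (inf_le_left.trans le_sup_left) (inf_le_left.trans le_sup_right))
  exact (sup_inf_le_inf_sup_sup_inf_sup v₁ v₂ u).trans
    (sup_le_sup_right (inf_le_inf_left v₁ (sup_le_sup_right hv₂ u)) _)

theorem supplementedIn_of_isCoatom [BoundedOrder α] {b m : α} (hm : IsCoatom m)
    (h : SmallIn (b ⊓ m) b) : SupplementedIn b := by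
  intro u hu
  by_cases hum : u ≤ m
  · refine ⟨b, le_rfl, sup_eq_left.2 hu, h.mono_left (inf_le_inf_left b hum) inf_le_left⟩
  · refine ⟨⊥, bot_le, ?_, by rw [bot_inf_eq]; exact smallIn_bot ⊥⟩
    rw [bot_sup_eq, h u hu (sup_inf_eq_of_isCoatom hm hu hum)]

end

theorem supplementedIn_top_of_forall_isCoatom [CompleteLattice α] [IsModularLattice α]
    (htop : IsCompactElement (⊤ : α))
    (h : ∀ m : α, IsCoatom m → ∃ b, b ⊔ m = ⊤ ∧ SmallIn (b ⊓ m) b) :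
    SupplementedIn (⊤ : α) := by
  set S := {b : α | ∃ m, IsCoatom m ∧ b ⊔ m = ⊤ ∧ SmallIn (b ⊓ m) b}
  have hS : sSup S = ⊤ := by
    have := CompleteLattice.coatomic_of_top_compact htop
    by_contra hne
    obtain ⟨m, hm, hSm⟩ := (eq_top_or_exists_le_coatom (sSup S)).resolve_left hne
    obtain ⟨b, hbm, hb⟩ := h m hm
    have hbm' : b ≤ m := (le_sSup (show b ∈ S from ⟨m, hm, hbm, hb⟩)).trans hSm
    exact hm.1 (by rwa [sup_eq_right.2 hbm'] at hbm)
  obtain ⟨t, htS, ht⟩ := (CompleteLattice.isCompactElement_iff_exists_le_sSup_of_le_sSup α ⊤).1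
    htop S hS.ge
  rw [← top_le_iff.1 ht]
  refine Finset.sup_induction supplementedIn_bot (fun _ h₁ _ h₂ ↦ h₁.sup h₂) fun b hb ↦ ?_
  obtain ⟨m, hm, -, hsmall⟩ := htS hb
  exact supplementedIn_of_isCoatom hm hsmall

theorem exists_disjoint_essentialIn [CompleteLattice α] [IsModularLattice α]
    [IsCompactlyGenerated α] {d s : α} :
    ∃ c ≤ s, Disjoint c d ∧ EssentialIn (d ⊔ c) s := by
  obtain ⟨c, ⟨hcs, hcd⟩, hmax⟩ := zorn_le₀ {c | c ≤ s ∧ Disjoint c d} fun C hC hchain ↦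
    ⟨sSup C, ⟨sSup_le fun c hc ↦ (hC hc).1,
      (hchain.directedOn.disjoint_sSup_left).2 fun c hc ↦ (hC hc).2⟩, fun _ ↦ le_sSup⟩
  refine ⟨c, hcs, hcd, fun k hks hk hdck ↦ hk ?_⟩
  have hdisj : Disjoint d (c ⊔ k) :=
    hcd.symm.disjoint_sup_right_of_disjoint_sup_left (disjoint_iff.2 hdck)
  have hkc : k ≤ c := le_sup_right.trans (hmax ⟨sup_le hcs hks, hdisj.symm⟩ le_sup_left)
  rwa [inf_eq_right.2 (hkc.trans le_sup_right)] at hdck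

end Lattice

section Module

universe w

variable {R : Type*} [Ring R] {M : Type*} [AddCommGroup M] [Module R M]

theorem map_subtype_sup_eq_self_iff {N : Submodule R M} {K Z : Submodule R N} :
    K.map N.subtype ⊔ Z.map N.subtype = N ↔ K ⊔ Z = ⊤ := by
  rw [← Submodule.map_sup, ← (map_injective_of_injective N.injective_subtype).eq_iff,
    map_subtype_top]

theorem smallIn_map_subtype_iff {N : Submodule R M} {K : Submodule R N} :
    SmallIn (K.map N.subtype) N ↔ SmallSub R K := by
  constructor
  · intro h Z hZ hsup
    refine hZ ((map_injective_of_injective N.injective_subtype) ?_)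
    rw [map_subtype_top]
    exact h _ (map_subtype_le N Z) (map_subtype_sup_eq_self_iff.2 hsup)
  · intro h Z hZN hsup
    rw [← inf_eq_right.2 hZN, ← map_comap_subtype] at hsup ⊢
    by_contra hne
    exact h _ (fun htop ↦ hne (by rw [htop, map_subtype_top])) (map_subtype_sup_eq_self_iff.1 hsup)

theorem isSupplement_iff {N L : Submodule R M} :
    IsSupplement R N L ↔ N ⊔ L = ⊤ ∧ SmallIn (N ⊓ L) N := by
  rw [IsSupplement, ← smallIn_map_subtype_iff, map_comap_subtype, ← inf_assoc, inf_idem]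

theorem DeltaSmall.eq_of_map_subtype_sup_eq {N : Submodule R M} {K : Submodule R N}
    (h : DeltaSmall R K) {Z : Submodule R M} (hZN : Z ≤ N) (hsup : K.map N.subtype ⊔ Z = N)
    (hsing : IsSingular R (N ⧸ Z.comap N.subtype)) : Z = N := by
  rw [← inf_eq_right.2 hZN, ← map_comap_subtype] at hsup ⊢
  by_contra hne
  exact h _ (fun htop ↦ hne (by rw [htop, map_subtype_top])) hsing
    (map_subtype_sup_eq_self_iff.1 hsup)

theorem SmallSub.deltaSmall {K : Submodule R M} (h : SmallSub R K) : DeltaSmall R K :=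
  fun Z hZ _ ↦ h Z hZ

theorem IsSingular.of_equiv_s16 {M₁ M₂ : Type w} [AddCommGroup M₁] [Module R M₁] [AddCommGroup M₂]
    [Module R M₂] (h : IsSingular R M₁) (e : M₁ ≃ₗ[R] M₂) : IsSingular R M₂ := by
  obtain ⟨N, _, _, L, hL, ⟨f⟩⟩ := h
  exact ⟨N, _, _, L, hL, ⟨f.trans e⟩⟩

theorem isSingular_quotient_of_essentialIn {E Y : Submodule R M} (hE : EssentialIn E Y) :
    IsSingular R (Y ⧸ E.comap Y.subtype) := by
  refine ⟨Y, _, _, E.comap Y.subtype, fun K hK hEK ↦ ?_, ⟨LinearEquiv.refl R _⟩⟩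
  refine hE _ (map_subtype_le Y K) (fun hbot ↦ hK ?_) ?_
  · exact map_injective_of_injective Y.injective_subtype (by rw [hbot, Submodule.map_bot])
  · have := congrArg (map Y.subtype) hEK
    rwa [map_inf _ Y.injective_subtype, map_comap_subtype, Submodule.map_bot, inf_assoc,
      inf_eq_right.2 (inf_le_right.trans (map_subtype_le Y K))] at this

theorem DeltaSmall.exists_le_disjoint_sup_eq {S N Z : Submodule R M} (hSN : S ≤ N)
    (hδ : DeltaSmall R (S.comap N.subtype)) (hZN : Z ≤ N) (hsup : S ⊔ Z = N) :
    ∃ C ≤ S, Disjoint Z C ∧ Z ⊔ C = N := by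
  obtain ⟨C, hCS, hCd, hess⟩ := exists_disjoint_essentialIn (d := S ⊓ Z) (s := S)
  have hsup' : S ⊔ (Z ⊔ C) = N := by rw [← sup_assoc, hsup, sup_eq_left.2 (hCS.trans hSN)]
  have hinf : S ⊓ (Z ⊔ C) = S ⊓ Z ⊔ C := by
    rw [sup_comm Z C, inf_comm, sup_inf_assoc_of_le Z hCS, inf_comm Z S, sup_comm]
  have hsing : IsSingular R (N ⧸ (Z ⊔ C).comap N.subtype) := by
    have := isSingular_quotient_of_essentialIn hess
    rw [← hinf, comap_inf] at this
    have := this.of_equiv_s16 (LinearMap.quotientInfEquivSupQuotient S (Z ⊔ C))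
    rwa [hsup'] at this
  have hZC : Z ⊔ C = N := hδ.eq_of_map_subtype_sup_eq (sup_le hZN (hCS.trans hSN))
    (by rwa [map_comap_subtype, inf_eq_right.2 hSN]) hsing
  refine ⟨C, hCS, disjoint_iff_inf_le.2 ?_, hZC⟩
  exact (le_inf (le_inf (inf_le_right.trans hCS) inf_le_left) inf_le_right).trans hCd.symm.le_bot

theorem SmallIn.le_radM {K : Submodule R M} (h : SmallIn K ⊤) : K ≤ radM R :=
  le_sInf fun _ hm ↦ h.le_of_isCoatom hm

theorem Supplemented.deltaSupplemented (h : Supplemented R M) : DeltaSupplemented R M :=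
  fun L ↦ (h L).imp fun _ hN ↦ ⟨hN.1, hN.2.deltaSmall⟩

theorem Supplemented.isSemisimpleModule_quotient_radM (h : Supplemented R M) :
    IsSemisimpleModule R (M ⧸ (radM R : Submodule R M)) := by
  set J : Submodule R M := radM R
  refine (isSemisimpleModule_iff R _).2 ⟨fun Q ↦ ?_⟩
  obtain ⟨N, hN⟩ := h (Q.comap J.mkQ)
  obtain ⟨hNQ, hsmall⟩ := isSupplement_iff.1 hN
  have hJ : N ⊓ Q.comap J.mkQ ≤ J := (hsmall.mono_right inf_le_left le_top).le_radM
  refine ⟨N.map J.mkQ, ?_, ?_⟩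
  · rw [disjoint_iff, eq_bot_iff]
    rintro _ ⟨hxQ, n, hn, rfl⟩
    exact (mem_bot R).2 ((Quotient.mk_eq_zero J).2 (hJ ⟨hn, hxQ⟩))
  · rw [codisjoint_iff, ← map_comap_eq_of_surjective J.mkQ_surjective Q, ← Submodule.map_sup,
      sup_comm, hNQ, Submodule.map_top, range_mkQ]

theorem supplemented_of_supplementedIn_top (h : SupplementedIn (⊤ : Submodule R M)) :
    Supplemented R M := by
  intro L
  obtain ⟨N, -, hNL, hsmall⟩ := h L le_top
  exact ⟨N, isSupplement_iff.2 ⟨hNL, hsmall⟩⟩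

end Module

theorem exists_maximal_sup_of_isNoetherian_quotient {R M ι : Type*} [Ring R] [AddCommGroup M]
    [Module R M] (p : Submodule R M) [IsNoetherian R (M ⧸ p)] (f : ι → Submodule R M)
    {s : Set ι} (hs : s.Nonempty) :
    ∃ i ∈ s, ∀ j ∈ s, f i ⊔ p ≤ f j ⊔ p → f j ⊔ p = f i ⊔ p := by
  obtain ⟨_, ⟨i, his, rfl⟩, hmax⟩ := set_has_maximal_iff_noetherian.2 ‹_›
    ((fun i ↦ (f i).map p.mkQ) '' s) (hs.image _)
  have hcomap : ∀ j, comap p.mkQ ((f j).map p.mkQ) = f j ⊔ p := fun j ↦ by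
    rw [comap_map_mkQ, sup_comm]
  refine ⟨i, his, fun j hjs hij ↦ ?_⟩
  have hle : (f i).map p.mkQ ≤ (f j).map p.mkQ :=
    map_le_iff_le_comap.2 (by rw [hcomap]; exact le_sup_left.trans hij)
  rw [← hcomap, ← hcomap, (hle.lt_or_eq.resolve_left (hmax _ ⟨j, hjs, rfl⟩)).symm]

section Ring

variable {R : Type*} [Ring R]

def leftAnn (x : R) : Submodule R R :=
  LinearMap.ker (LinearMap.toSpanSingleton R R x)

@[simp]
theorem mem_leftAnn {x r : R} : r ∈ leftAnn x ↔ r * x = 0 := by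
  simp [leftAnn]

theorem leftAnn_add_le {Z C : Submodule R R} (hZC : Disjoint Z C) {z c : R} (hz : z ∈ Z)
    (hc : c ∈ C) : leftAnn (z + c) ≤ leftAnn z := fun r hr ↦ by
  rw [mem_leftAnn, mul_add] at hr
  have hrz : r * z ∈ C := by
    rw [eq_neg_of_add_eq_zero_left hr]
    exact C.neg_mem (C.smul_mem r hc)
  exact mem_leftAnn.2 (disjoint_def.1 hZC _ (Z.smul_mem r hz) hrz)

theorem exists_mul_one_sub_eq_one {j : R} (hj : j ∈ (radM R : Submodule R R)) :
    ∃ w, w * (1 - j) = 1 := by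
  obtain ⟨w, hw⟩ := Ideal.exists_mul_sub_mem_of_sub_one_mem_jacobson (I := ⊥) (1 - j)
    (by rw [Ideal.jacobson_bot, sub_sub_cancel_left]; exact neg_mem hj)
  exact ⟨w, sub_eq_zero.1 hw⟩

theorem mem_of_leftAnn_le_sup_radM {Z C : Submodule R R} (hZC : Disjoint Z C) {x z c : R}
    (hZx : Z ≤ span R {x}) (hz : z ∈ Z) (hc : c ∈ C) (hzc : z + c = x)
    (hann : leftAnn z ≤ leftAnn x ⊔ radM R) : x ∈ Z := by
  have hcx : c ∈ span R {x} := by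
    rw [← add_sub_cancel_left z c, hzc]
    exact sub_mem (mem_span_singleton_self x) (hZx hz)
  obtain ⟨s, rfl⟩ := mem_span_singleton.1 hcx
  have hz_eq : z = x - s * x := eq_sub_of_add_eq hzc
  have hsz : s * z = 0 := by
    refine disjoint_def.1 hZC _ (Z.smul_mem s hz) ?_
    rw [hz_eq, mul_sub]
    exact C.sub_mem hc (C.smul_mem s hc)
  obtain ⟨a, ha, j, hj, rfl⟩ := mem_sup.1 (hann (mem_leftAnn.2 hsz))
  have hz' : (1 - j) * x = z := by
    rw [hz_eq, add_mul, mem_leftAnn.1 ha, zero_add, sub_mul, one_mul]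
  obtain ⟨w, hw⟩ := exists_mul_one_sub_eq_one hj
  have hwz : w * z = x := by rw [← hz', ← mul_assoc, hw, one_mul]
  exact hwz ▸ Z.smul_mem w hz

end Ring

theorem exists_supplement_of_isCoatom {R : Type*} [Ring R]
    [IsNoetherian R (R ⧸ (radM R : Submodule R R))] (hδ : DeltaSupplemented R R)
    {m : Submodule R R} (hm : IsCoatom m) : ∃ Λ, Λ ⊔ m = ⊤ ∧ SmallIn (Λ ⊓ m) Λ := by
  obtain ⟨N, hNm, hS⟩ := hδ m
  obtain ⟨x₀, hx₀N, hx₀m⟩ := SetLike.not_le_iff_exists.1 fun h : N ≤ m ↦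
    hm.1 (by rwa [sup_eq_right.2 h] at hNm)
  obtain ⟨x, ⟨hxN, hxm⟩, hmax⟩ := exists_maximal_sup_of_isNoetherian_quotient (radM R) leftAnn
    (s := {x | x ∈ N ∧ x ∉ m}) ⟨x₀, hx₀N, hx₀m⟩
  have hxN' : span R {x} ≤ N := (span_singleton_le_iff_mem x N).2 hxN
  refine ⟨span R {x}, ?_, fun Z hZ hsup ↦ ?_⟩
  · rw [sup_comm]
    exact hm.2 _ (left_lt_sup.2 fun h ↦ hxm (h (mem_span_singleton_self x)))
  have hZm : ¬ Z ≤ m := fun h ↦ hxm <|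
    (show span R {x} ≤ m by rw [← hsup]; exact sup_le inf_le_right h) (mem_span_singleton_self x)
  obtain ⟨C, hCS, hZC, hZCN⟩ := hS.exists_le_disjoint_sup_eq inf_le_left (hZ.trans hxN')
    (sup_inf_eq_of_isCoatom hm (hZ.trans hxN') hZm)
  obtain ⟨z, hz, c, hc, hzc⟩ := mem_sup.1 (hZCN ▸ hxN : x ∈ Z ⊔ C)
  have hzm : z ∉ m := fun h ↦ hxm (hzc ▸ m.add_mem h (hCS hc).2)
  have hann := hmax z ⟨hxN' (hZ hz), hzm⟩ (sup_le_sup_right (hzc ▸ leftAnn_add_le hZC hz hc) _)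
  exact le_antisymm hZ <| (span_singleton_le_iff_mem x Z).2 <|
    mem_of_leftAnn_le_sup_radM hZC hZ hz hc hzc (hann ▸ le_sup_left)

theorem semiperfect_iff_deltaSemiperfect_and_semilocal (R : Type*) [Ring R] :
    Supplemented R R ↔
      DeltaSupplemented R R ∧ IsSemisimpleModule R (R ⧸ (radM R : Submodule R R)) := by
  refine ⟨fun h ↦ ⟨h.deltaSupplemented, h.isSemisimpleModule_quotient_radM⟩, fun ⟨hδ, hss⟩ ↦ ?_⟩
  exact supplemented_of_supplementedIn_top <| supplementedIn_top_of_forall_isCoatom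
    Ideal.isCompactElement_top fun _ hm ↦ exists_supplement_of_isCoatom hδ hm
end
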